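/- Fix λ ≠ 0. A continuously differentiable covector field A : ℝ⁴ → ℝ⁴ satisfies the invariance conditions L_ξA = 0 for ξ = e₁, ξ = e₂, ξ = e₄ and ξ = e₁₂ − e₁₄ + λe₃ = (−x²−x⁴, x¹, λ, −x¹) if and only if there exist constants C₁, C₂, C₃, C₄ ∈ ℝ such that for all x: A₁(x) = (C₂/λ)·x³ + C₃, A₂(x) = (C₂/(2λ²))·(x³)² + (C₃/λ)·x³ + C₄, A₃(x) = C₁ and A₄(x) = A₂(x) + C₂. (This is the class P₍₄,₈₎ for λ ≠ 0, parabolic helices with a three-dimensional group of translations.) -/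

import Mathlib

open Real

/-- Partial derivative of a scalar function on ℝ⁴ in the j-th coordinate direction. -/
noncomputable def pd (j : Fin 4) (f : (Fin 4 → ℝ) → ℝ) (x : Fin 4 → ℝ) : ℝ :=
  fderiv ℝ f x (Pi.single j 1)

/-- The i-th component of the Lie derivative of the covector field A along
the vector field ξ at the point x:  Σ_j ξ^j ∂_j A_i + Σ_j A_j ∂_i ξ^j. -/
noncomputable def lieCov (ξ A : (Fin 4 → ℝ) → Fin 4 → ℝ) (x : Fin 4 → ℝ) (i : Fin 4) : ℝ :=
  (∑ j : Fin 4, ξ x j * pd j (fun y => A y i) x)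
    + ∑ j : Fin 4, A x j * pd i (fun y => ξ y j) x

/-- Invariance condition L_ξ A = 0 on all of ℝ⁴. -/
def PInvariant (ξ A : (Fin 4 → ℝ) → Fin 4 → ℝ) : Prop :=
  ∀ x i, lieCov ξ A x i = 0

/-- Invariance condition L_ξ A = 0 on a set M. -/
def PInvariantOn (ξ A : (Fin 4 → ℝ) → Fin 4 → ℝ) (M : Set (Fin 4 → ℝ)) : Prop :=
  ∀ x ∈ M, ∀ i, lieCov ξ A x i = 0

def e1 : (Fin 4 → ℝ) → Fin 4 → ℝ := fun _ => ![1, 0, 0, 0]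
def e2 : (Fin 4 → ℝ) → Fin 4 → ℝ := fun _ => ![0, 1, 0, 0]
def e3 : (Fin 4 → ℝ) → Fin 4 → ℝ := fun _ => ![0, 0, 1, 0]
def e4 : (Fin 4 → ℝ) → Fin 4 → ℝ := fun _ => ![0, 0, 0, 1]
def e12 : (Fin 4 → ℝ) → Fin 4 → ℝ := fun x => ![-x 1, x 0, 0, 0]
def e13 : (Fin 4 → ℝ) → Fin 4 → ℝ := fun x => ![x 2, 0, -x 0, 0]
def e23 : (Fin 4 → ℝ) → Fin 4 → ℝ := fun x => ![0, -x 2, x 1, 0]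
def e14 : (Fin 4 → ℝ) → Fin 4 → ℝ := fun x => ![x 3, 0, 0, x 0]
def e24 : (Fin 4 → ℝ) → Fin 4 → ℝ := fun x => ![0, x 3, 0, x 1]
def e34 : (Fin 4 → ℝ) → Fin 4 → ℝ := fun x => ![0, 0, x 3, x 2]

/- ### Auxiliary lemmas -/

lemma pd_eq {f : (Fin 4 → ℝ) → ℝ} {L : (Fin 4 → ℝ) →L[ℝ] ℝ} {x : Fin 4 → ℝ}
    (hf : HasFDerivAt f L x) (j : Fin 4) : pd j f x = L (Pi.single j 1) := by
  rw [pd, hf.fderiv]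

lemma hasFDerivAt_coord (k : Fin 4) (x : Fin 4 → ℝ) :
    HasFDerivAt (fun y : Fin 4 → ℝ => y k)
      (ContinuousLinearMap.proj k : (Fin 4 → ℝ) →L[ℝ] ℝ) x :=
  hasFDerivAt_apply k x

@[simp] lemma pd_const (j : Fin 4) (c : ℝ) (x : Fin 4 → ℝ) : pd j (fun _ => c) x = 0 := by
  simp [pd]

@[simp] lemma pd_coord (j k : Fin 4) (x : Fin 4 → ℝ) :
    pd j (fun y => y k) x = if j = k then 1 else 0 := by
  rw [pd_eq (hasFDerivAt_coord k x)]
  simp [Pi.single_apply, eq_comm]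

@[simp] lemma pd_n13 (i : Fin 4) (x : Fin 4 → ℝ) :
    pd i (fun y : Fin 4 → ℝ => -y 1 - y 3) x
      = -(if i = 1 then 1 else 0) - (if i = 3 then 1 else 0) := by
  rw [pd_eq (f := fun y : Fin 4 → ℝ => -y 1 - y 3) ((hasFDerivAt_coord 1 x).neg.sub (hasFDerivAt_coord 3 x))]
  simp [Pi.single_apply, eq_comm]

@[simp] lemma pd_neg0 (i : Fin 4) (x : Fin 4 → ℝ) :
    pd i (fun y : Fin 4 → ℝ => -y 0) x = -(if i = 0 then 1 else 0) := by
  rw [pd_eq (f := fun y : Fin 4 → ℝ => -y 0) (hasFDerivAt_coord 0 x).neg]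
  simp [Pi.single_apply, eq_comm]

@[simp] lemma pd_affine (a b : ℝ) (j : Fin 4) (x : Fin 4 → ℝ) :
    pd j (fun y : Fin 4 → ℝ => a * y 2 + b) x = a * (if j = 2 then 1 else 0) := by
  rw [pd_eq (((hasFDerivAt_coord 2 x).const_mul a).add_const b)]
  simp [Pi.single_apply, eq_comm]

@[simp] lemma pd_quad (a b c : ℝ) (j : Fin 4) (x : Fin 4 → ℝ) :
    pd j (fun y : Fin 4 → ℝ => a * (y 2) ^ 2 + b * y 2 + c) x
      = (2 * a * x 2 + b) * (if j = 2 then 1 else 0) := by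
  have hfun : (fun y : Fin 4 → ℝ => a * (y 2) ^ 2 + b * y 2 + c)
      = fun y : Fin 4 → ℝ => a * (y 2 * y 2) + b * y 2 + c := by
    funext y; ring
  have hF := ((((hasFDerivAt_coord 2 x).mul (hasFDerivAt_coord 2 x)).const_mul a).add
      ((hasFDerivAt_coord 2 x).const_mul b)).add_const c
  rw [hfun, pd_eq (f := fun y : Fin 4 → ℝ => a * (y 2 * y 2) + b * y 2 + c) hF]
  by_cases h : j = 2 <;> simp [h, Pi.single_apply] <;> ring

lemma const_of_hasDerivAt_zero {f : ℝ → ℝ} (h : ∀ t, HasDerivAt f 0 t) (a b : ℝ) :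
    f a = f b :=
  is_const_of_deriv_eq_zero (fun t => (h t).differentiableAt) (fun t => (h t).deriv) a b

lemma hasDerivAt_update4 (x : Fin 4 → ℝ) (j : Fin 4) (s : ℝ) :
    HasDerivAt (fun s : ℝ => Function.update x j s) (Pi.single j 1) s := by
  have h : (fun s : ℝ => Function.update x j s)
      = fun s : ℝ => x + (s - x j) • (Pi.single j 1 : Fin 4 → ℝ) := by
    funext s k
    by_cases hk : k = j
    · subst hk; simp
    · simp [Function.update_apply, hk, Pi.single_apply, Ne.symm hk]
  rw [h]
  simpa using (((hasDerivAt_id s).sub_const (x j)).smul_const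
    (Pi.single j 1 : Fin 4 → ℝ)).const_add x

lemma const_dir {f : (Fin 4 → ℝ) → ℝ} (hf : Differentiable ℝ f) (j : Fin 4)
    (h : ∀ y, pd j f y = 0) (x : Fin 4 → ℝ) (t : ℝ) :
    f (Function.update x j t) = f x := by
  have hpath : ∀ s : ℝ, HasDerivAt (fun s => f (Function.update x j s)) 0 s := by
    intro s
    have hc := ((hf (Function.update x j s)).hasFDerivAt).comp_hasDerivAt s
      (hasDerivAt_update4 x j s)
    have h0 : fderiv ℝ f (Function.update x j s) (Pi.single j 1) = 0 := h _
    simpa [Function.comp_def, h0] using hc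
  have hconst := const_of_hasDerivAt_zero hpath t (x j)
  simpa [Function.update_eq_self] using hconst

lemma hasDerivAt_single2 (t : ℝ) :
    HasDerivAt (fun s : ℝ => (Pi.single (2 : Fin 4) s : Fin 4 → ℝ)) (Pi.single 2 1) t := by
  have h : (fun s : ℝ => (Pi.single (2 : Fin 4) s : Fin 4 → ℝ))
      = fun s : ℝ => s • (Pi.single (2 : Fin 4) 1 : Fin 4 → ℝ) := by
    funext s
    rw [← Pi.single_smul, smul_eq_mul, mul_one]
  rw [h]
  simpa using (hasDerivAt_id t).smul_const (Pi.single (2 : Fin 4) 1 : Fin 4 → ℝ)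

lemma update_update_update_eq_single (x : Fin 4 → ℝ) :
    Function.update (Function.update (Function.update x 0 0) 1 0) 3 0
      = Pi.single 2 (x 2) := by
  funext k
  fin_cases k <;> simp [Function.update_apply, Pi.single_apply]

/-- Class P_{4,8} for λ ≠ 0: parabolic helices with a three-dimensional
group of translations. -/
theorem class_P48_lambda_ne_zero (l : ℝ) (hl : l ≠ 0)
    (A : (Fin 4 → ℝ) → Fin 4 → ℝ) (hA : ContDiff ℝ 1 A) :
    (PInvariant e1 A ∧ PInvariant e2 A ∧ PInvariant e4 A ∧
      PInvariant (fun x => ![-x 1 - x 3, x 0, l, -x 0]) A) ↔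
      ∃ C1 C2 C3 C4 : ℝ,
        ∀ x, A x 0 = C2 / l * x 2 + C3 ∧
          A x 1 = C2 / (2 * l ^ 2) * (x 2) ^ 2 + C3 / l * x 2 + C4 ∧
          A x 2 = C1 ∧
          A x 3 = A x 1 + C2 := by
  constructor
  · rintro ⟨h1, h2, h4, hx⟩
    have hAd : ∀ i, Differentiable ℝ (fun y => A y i) :=
      differentiable_pi.mp (hA.differentiable one_ne_zero)
    have hp0 : ∀ z i, pd 0 (fun y => A y i) z = 0 := by
      intro z i
      have := h1 z i
      simpa [lieCov, Fin.sum_univ_four, e1] using this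
    have hp1 : ∀ z i, pd 1 (fun y => A y i) z = 0 := by
      intro z i
      have := h2 z i
      simpa [lieCov, Fin.sum_univ_four, e2] using this
    have hp3 : ∀ z i, pd 3 (fun y => A y i) z = 0 := by
      intro z i
      have := h4 z i
      simpa [lieCov, Fin.sum_univ_four, e4] using this
    have hrep : ∀ z i, A z i = A (Pi.single 2 (z 2)) i := by
      intro z i
      have c0 := const_dir (hAd i) 0 (fun y => hp0 y i) z 0
      have c1 := const_dir (hAd i) 1 (fun y => hp1 y i) (Function.update z 0 0) 0
      have c3 := const_dir (hAd i) 3 (fun y => hp3 y i)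
        (Function.update (Function.update z 0 0) 1 0) 0
      rw [update_update_update_eq_single] at c3
      exact (c3.trans (c1.trans c0)).symm
    have hg : ∀ i t, HasDerivAt (fun t => A (Pi.single 2 t) i)
        (pd 2 (fun y => A y i) (Pi.single 2 t)) t := by
      intro i t
      exact ((hAd i) _).hasFDerivAt.comp_hasDerivAt t (hasDerivAt_single2 t)
    -- the four ODEs
    have E0 : ∀ t, l * pd 2 (fun y => A y 0) (Pi.single 2 t)
        = A (Pi.single 2 t) 3 - A (Pi.single 2 t) 1 := by
      intro t
      have := hx (Pi.single 2 t) 0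
      simp [lieCov, Fin.sum_univ_four, Pi.single_apply] at this
      linarith
    have E1 : ∀ t, l * pd 2 (fun y => A y 1) (Pi.single 2 t) = A (Pi.single 2 t) 0 := by
      intro t
      have := hx (Pi.single 2 t) 1
      simp [lieCov, Fin.sum_univ_four, Pi.single_apply] at this
      linarith
    have E2 : ∀ t, pd 2 (fun y => A y 2) (Pi.single 2 t) = 0 := by
      intro t
      have := hx (Pi.single 2 t) 2
      simp [lieCov, Fin.sum_univ_four, Pi.single_apply] at this
      rcases this with h | h
      · exact absurd h hl
      · exact h
    have E3 : ∀ t, l * pd 2 (fun y => A y 3) (Pi.single 2 t) = A (Pi.single 2 t) 0 := by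
      intro t
      have := hx (Pi.single 2 t) 3
      simp [lieCov, Fin.sum_univ_four, Pi.single_apply] at this
      linarith
    set C1 := A (Pi.single 2 0) 2 with hC1
    set C2 := A (Pi.single 2 0) 3 - A (Pi.single 2 0) 1 with hC2
    set C3 := A (Pi.single 2 0) 0 with hC3
    set C4 := A (Pi.single 2 0) 1 with hC4
    have hG2 : ∀ t, A (Pi.single 2 t) 2 = C1 := by
      intro t
      exact const_of_hasDerivAt_zero
        (fun s => (E2 s) ▸ hg 2 s) t 0
    have hG31 : ∀ t, A (Pi.single 2 t) 3 - A (Pi.single 2 t) 1 = C2 := by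
      intro t
      refine const_of_hasDerivAt_zero (f := fun s => A (Pi.single 2 s) 3 - A (Pi.single 2 s) 1)
        (fun s => ?_) t 0
      have hd := (hg 3 s).sub (hg 1 s)
      have heq : pd 2 (fun y => A y 3) (Pi.single 2 s) = pd 2 (fun y => A y 1) (Pi.single 2 s) :=
        mul_left_cancel₀ hl ((E3 s).trans (E1 s).symm)
      simpa [heq, Pi.sub_def] using hd
    have hG0 : ∀ t, A (Pi.single 2 t) 0 = C2 / l * t + C3 := by
      intro t
      have key : ∀ s : ℝ,
          HasDerivAt (fun s => A (Pi.single 2 s) 0 - C2 / l * s) 0 s := by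
        intro s
        have hd := (hg 0 s).sub (((hasDerivAt_id s).const_mul (C2 / l)))
        have hD : pd 2 (fun y => A y 0) (Pi.single 2 s) = C2 / l := by
          have := E0 s
          rw [hG31 s] at this
          field_simp
          linarith
        rw [hD] at hd
        simpa [Pi.sub_def] using hd
      have := const_of_hasDerivAt_zero key t 0
      have h0 : A (Pi.single 2 (0:ℝ)) 0 - C2 / l * 0 = C3 := by rw [hC3]; ring
      rw [h0] at this
      linarith
    have hG1 : ∀ t, A (Pi.single 2 t) 1 = C2 / (2 * l ^ 2) * t ^ 2 + C3 / l * t + C4 := by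
      intro t
      have key : ∀ s : ℝ,
          HasDerivAt (fun s => A (Pi.single 2 s) 1 - (C2 / (2 * l ^ 2) * s ^ 2 + C3 / l * s))
            0 s := by
        intro s
        have hq : HasDerivAt (fun s : ℝ => C2 / (2 * l ^ 2) * s ^ 2 + C3 / l * s)
            (C2 / (2 * l ^ 2) * (2 * s) + C3 / l) s := by
          have := ((hasDerivAt_pow 2 s).const_mul (C2 / (2 * l ^ 2))).add
            ((hasDerivAt_id s).const_mul (C3 / l))
          simpa [Pi.add_def] using this
        have hd := (hg 1 s).sub hq
        have hE := E1 s
        rw [hG0 s] at hE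
        have hD : pd 2 (fun y => A y 1) (Pi.single 2 s)
            = C2 / (2 * l ^ 2) * (2 * s) + C3 / l := by
          apply mul_left_cancel₀ hl
          rw [hE]
          field_simp
        rw [hD] at hd
        simpa [Pi.sub_def] using hd
      have := const_of_hasDerivAt_zero key t 0
      have h0 : A (Pi.single 2 (0:ℝ)) 1 - (C2 / (2 * l ^ 2) * 0 ^ 2 + C3 / l * 0) = C4 := by
        rw [hC4]; ring
      rw [h0] at this
      linarith
    refine ⟨C1, C2, C3, C4, fun z => ⟨?_, ?_, ?_, ?_⟩⟩
    · rw [hrep z 0, hG0]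
    · rw [hrep z 1, hG1]
    · rw [hrep z 2, hG2]
    · rw [hrep z 3, hrep z 1]
      have := hG31 (z 2)
      linarith
  · rintro ⟨C1, C2, C3, C4, h⟩
    have h0 : (fun y => A y 0) = fun y : Fin 4 → ℝ => C2 / l * y 2 + C3 :=
      funext fun y => (h y).1
    have h1f : (fun y => A y 1)
        = fun y : Fin 4 → ℝ => C2 / (2 * l ^ 2) * (y 2) ^ 2 + C3 / l * y 2 + C4 :=
      funext fun y => (h y).2.1
    have h2f : (fun y => A y 2) = fun _ : Fin 4 → ℝ => C1 :=
      funext fun y => (h y).2.2.1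
    have h3f : (fun y => A y 3)
        = fun y : Fin 4 → ℝ => C2 / (2 * l ^ 2) * (y 2) ^ 2 + C3 / l * y 2 + (C4 + C2) := by
      funext y
      rw [(h y).2.2.2, (h y).2.1]
      ring
    refine ⟨?_, ?_, ?_, ?_⟩ <;> intro x i <;>
      obtain ⟨hx0, hx1, hx2, hx3⟩ := h x <;>
      fin_cases i <;>
      simp [lieCov, Fin.sum_univ_four, e1, e2, e4, h0, h1f, h2f, h3f, hx0, hx1, hx2, hx3] <;>
      field_simp <;> ring
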